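/- Let Λ be an order of an étale algebra that is Gorenstein at the maximal ideal 𝔓 (i.e., (Λ : 𝔓)/Λ ≅ Λ/𝔓 as Λ/𝔓-modules) and suppose Λ ≠ (𝔓 : 𝔓). Then Γ = (𝔓 : 𝔓) is the unique minimal overorder of Λ with conductor (Λ : Γ) = 𝔓. -/

import Mathlib

/-- The conductor `(Λ : Γ) ∩ Λ` as an ideal of `Λ`: elements `a ∈ Λ` with
`aΓ ⊆ Λ`. -/
def conductorIdeal {R A : Type*} [CommRing R] [CommRing A] [Algebra R A]
    (Λ Γ : Subalgebra R A) : Ideal Λ where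
  carrier := {a : Λ | ∀ g ∈ Γ, (a : A) * g ∈ Λ}
  zero_mem' := by
    intro g hg
    simpa using Λ.zero_mem
  add_mem' := by
    intro a b ha hb g hg
    have := Λ.add_mem (ha g hg) (hb g hg)
    push_cast
    rw [add_mul]
    exact this
  smul_mem' := by
    intro c a ha g hg
    have h1 : ((c • a : Λ) : A) * g = (c : A) * ((a : A) * g) := by
      show ((c * a : Λ) : A) * g = _; push_cast; ring
    rw [h1]
    exact Λ.mul_mem c.2 (ha g hg)

/-!
Write `(𝔓 : 𝔓)` for the multiplier ring of `𝔓`. The Gorenstein condition says `(Λ : 𝔓) = Λ + Λ x₀`.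
If `Λ ⊊ Γ'' ⊆ (𝔓 : 𝔓)`, pick `x ∈ Γ'' \ Λ` and write `x = λ + a x₀`; then `a ∉ 𝔓`, so `a` is a unit
modulo `𝔓` and `x₀ ∈ Γ''`, whence `(𝔓 : 𝔓) ⊆ Λ + Λ x₀ ⊆ Γ''`. The conductor of `(𝔓 : 𝔓)` contains
`𝔓` and is proper, hence equals `𝔓`. Conversely every `Γ'` is contained in the multiplier ring of its
own conductor, so an overorder with conductor `𝔓` lies in `(𝔓 : 𝔓)` and equals it by minimality.
-/

namespace Subalgebra

variable {R A : Type*} [CommRing R] [CommRing A] [Algebra R A]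

section Multiplier

variable (Λ : Subalgebra R A) (𝔓 : Ideal Λ)

/-- The multiplier ring `(𝔓 : 𝔓) = {x ∈ A | x𝔓 ⊆ 𝔓}`. -/
def multiplierRing : Subalgebra R A where
  carrier := {x | ∀ p : Λ, p ∈ 𝔓 → ∃ q : Λ, q ∈ 𝔓 ∧ x * (p : A) = (q : A)}
  mul_mem' {x y} hx hy p hp := by
    obtain ⟨q, hq, hyq⟩ := hy p hp
    obtain ⟨r, hr, hxr⟩ := hx q hq
    exact ⟨r, hr, by rw [mul_assoc, hyq, hxr]⟩
  add_mem' {x y} hx hy p hp := by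
    obtain ⟨q, hq, hxq⟩ := hx p hp
    obtain ⟨r, hr, hyr⟩ := hy p hp
    exact ⟨q + r, 𝔓.add_mem hq hr, by rw [add_mul, hxq, hyr, Subalgebra.coe_add]⟩
  algebraMap_mem' r p hp := ⟨algebraMap R Λ r * p, 𝔓.mul_mem_left _ hp, rfl⟩

theorem le_multiplierRing : Λ ≤ multiplierRing Λ 𝔓 :=
  fun x hx p hp => ⟨⟨x, hx⟩ * p, 𝔓.mul_mem_left _ hp, rfl⟩

variable {Λ 𝔓}

theorem mul_mem_of_mem_multiplierRing {x : A} (hx : x ∈ multiplierRing Λ 𝔓) {p : Λ}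
    (hp : p ∈ 𝔓) : x * (p : A) ∈ Λ := by
  obtain ⟨q, -, hq⟩ := hx p hp
  exact hq ▸ q.2

variable (Λ 𝔓)

theorem conductorIdeal_eq_top_iff (Γ : Subalgebra R A) : conductorIdeal Λ Γ = ⊤ ↔ Γ ≤ Λ := by
  refine ⟨fun h g hg => ?_, fun h => eq_top_iff.mpr fun a _ g hg => Λ.mul_mem a.2 (h hg)⟩
  simpa using (h ▸ Submodule.mem_top : (1 : Λ) ∈ conductorIdeal Λ Γ) g hg

theorem le_conductorIdeal_multiplierRing : 𝔓 ≤ conductorIdeal Λ (multiplierRing Λ 𝔓) :=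
  fun _ hp _ hg => mul_comm (_ : A) _ ▸ mul_mem_of_mem_multiplierRing hg hp

variable {Λ 𝔓}

theorem conductorIdeal_multiplierRing (hmax : 𝔓.IsMaximal) (hlt : Λ < multiplierRing Λ 𝔓) :
    conductorIdeal Λ (multiplierRing Λ 𝔓) = 𝔓 :=
  (hmax.eq_of_le (mt (conductorIdeal_eq_top_iff Λ _).mp (not_le_of_gt hlt))
    (le_conductorIdeal_multiplierRing Λ 𝔓)).symm

variable (Λ) in
theorem le_multiplierRing_conductorIdeal (Γ : Subalgebra R A) :
    Γ ≤ multiplierRing Λ (conductorIdeal Λ Γ) := by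
  intro g hg p hp
  have hgp : g * (p : A) ∈ Λ := mul_comm (p : A) g ▸ hp g hg
  refine ⟨⟨g * p, hgp⟩, fun h hh => ?_, rfl⟩
  have h_eq : g * p * h = p * (g * h) := by ring
  exact h_eq ▸ hp _ (Γ.mul_mem hg hh)

end Multiplier

section Gorenstein

variable {Λ : Subalgebra R A} {𝔓 : Ideal Λ} {x₀ : A}

/-- `(Λ : 𝔓) = Λ + Λ x₀`, where `(Λ : 𝔓) = {x ∈ A | x𝔓 ⊆ Λ}`. -/
def IsColonGenerator (Λ : Subalgebra R A) (𝔓 : Ideal Λ) (x₀ : A) : Prop :=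
  (∀ p : Λ, p ∈ 𝔓 → x₀ * (p : A) ∈ Λ) ∧
    ∀ x : A, (∀ p : Λ, p ∈ 𝔓 → x * (p : A) ∈ Λ) → ∃ a : Λ, x - (a : A) * x₀ ∈ Λ

theorem IsColonGenerator.exists_sub_mul_mem (hx₀ : IsColonGenerator Λ 𝔓 x₀) {x : A}
    (hx : x ∈ multiplierRing Λ 𝔓) : ∃ a : Λ, x - (a : A) * x₀ ∈ Λ :=
  hx₀.2 x fun _ => mul_mem_of_mem_multiplierRing hx

theorem IsColonGenerator.multiplierRing_le (hx₀ : IsColonGenerator Λ 𝔓 x₀) {Γ : Subalgebra R A}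
    (hΛΓ : Λ ≤ Γ) (hx₀Γ : x₀ ∈ Γ) : multiplierRing Λ 𝔓 ≤ Γ := by
  intro x hx
  obtain ⟨a, ha⟩ := hx₀.exists_sub_mul_mem hx
  simpa using Γ.add_mem (hΛΓ ha) (Γ.mul_mem (hΛΓ a.2) hx₀Γ)

theorem IsColonGenerator.toSubmodule_multiplierRing_le (hx₀ : IsColonGenerator Λ 𝔓 x₀) :
    toSubmodule (multiplierRing Λ 𝔓) ≤
      toSubmodule Λ ⊔ (toSubmodule Λ).map (LinearMap.mulRight R x₀) := by
  intro x hx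
  obtain ⟨a, ha⟩ := hx₀.exists_sub_mul_mem hx
  rw [← sub_add_cancel x (a * x₀)]
  exact Submodule.add_mem _ (Submodule.mem_sup_left (show _ ∈ toSubmodule Λ from ha))
    (Submodule.mem_sup_right ⟨(a : A), a.2, rfl⟩)

theorem IsColonGenerator.finite_multiplierRing [IsNoetherianRing R] [Module.Finite R Λ]
    (hx₀ : IsColonGenerator Λ 𝔓 x₀) : Module.Finite R (multiplierRing Λ 𝔓) := by
  have hΛ : (toSubmodule Λ).FG := Module.Finite.iff_fg.mp inferInstance
  exact Module.Finite.iff_fg.mpr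
    ((hΛ.sup (hΛ.map _)).of_le hx₀.toSubmodule_multiplierRing_le)

theorem IsColonGenerator.mem_of_lt_of_le_multiplierRing (hx₀ : IsColonGenerator Λ 𝔓 x₀)
    (hmax : 𝔓.IsMaximal) {Γ : Subalgebra R A} (hlt : Λ < Γ) (hle : Γ ≤ multiplierRing Λ 𝔓) :
    x₀ ∈ Γ := by
  obtain ⟨x, hxΓ, hxΛ⟩ := SetLike.exists_of_lt hlt
  obtain ⟨a, ha⟩ := hx₀.exists_sub_mul_mem (hle hxΓ)
  have haP : a ∉ 𝔓 := fun haP => hxΛ <| by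
    have hx_eq : x = (x - a * x₀) + x₀ * a := by ring
    exact hx_eq ▸ Λ.add_mem ha (hx₀.1 a haP)
  obtain ⟨b, p, hp, hbp⟩ := hmax.exists_inv haP
  have hbp' : (b : A) * a + p = 1 := by exact_mod_cast hbp
  have hx₀_eq : x₀ = b * x - b * (x - a * x₀) + x₀ * p := by linear_combination (-x₀) * hbp'
  rw [hx₀_eq]
  exact Γ.add_mem (Γ.sub_mem (Γ.mul_mem (hlt.le b.2) hxΓ) (Γ.mul_mem (hlt.le b.2) (hlt.le ha)))
    (hlt.le (hx₀.1 p hp))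

theorem IsColonGenerator.eq_multiplierRing_of_lt_of_le (hx₀ : IsColonGenerator Λ 𝔓 x₀)
    (hmax : 𝔓.IsMaximal) {Γ : Subalgebra R A} (hlt : Λ < Γ) (hle : Γ ≤ multiplierRing Λ 𝔓) :
    Γ = multiplierRing Λ 𝔓 :=
  le_antisymm hle (hx₀.multiplierRing_le hlt.le (hx₀.mem_of_lt_of_le_multiplierRing hmax hlt hle))

end Gorenstein

end Subalgebra

open Subalgebra

theorem statement19_general {R : Type*} {K A : Type u} [CommRing R] [IsDedekindDomain R]
    [Field K] [CommRing A] [Algebra K A] [Algebra R A]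
    (Λ : Subalgebra R A)
    (hΛfin : Module.Finite R Λ) (hΛspan : Submodule.span K (Λ : Set A) = ⊤)
    (𝔓 : Ideal Λ) (hmax : 𝔓.IsMaximal)
    (hGor : ∃ x₀ : A, (∀ p : Λ, p ∈ 𝔓 → x₀ * (p : A) ∈ Λ) ∧ x₀ ∉ Λ ∧
      ∀ x : A, (∀ p : Λ, p ∈ 𝔓 → x * (p : A) ∈ Λ) →
        ∃ a : Λ, x - (a : A) * x₀ ∈ Λ)
    (hneq : {x : A | ∀ p : Λ, p ∈ 𝔓 → ∃ q : Λ, q ∈ 𝔓 ∧ x * (p : A) = (q : A)}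
      ≠ (Λ : Set A)) :
    ∃ Γ : Subalgebra R A,
      (Γ : Set A) =
        {x : A | ∀ p : Λ, p ∈ 𝔓 → ∃ q : Λ, q ∈ 𝔓 ∧ x * (p : A) = (q : A)} ∧
      ((Module.Finite R Γ ∧ Submodule.span K (Γ : Set A) = ⊤) ∧ Λ < Γ ∧
        (∀ Γ'' : Subalgebra R A,
          (Module.Finite R Γ'' ∧ Submodule.span K (Γ'' : Set A) = ⊤) →
          Λ ≤ Γ'' → Γ'' ≤ Γ → Γ'' = Λ ∨ Γ'' = Γ) ∧
        conductorIdeal Λ Γ = 𝔓) ∧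
      (∀ Γ' : Subalgebra R A,
        ((Module.Finite R Γ' ∧ Submodule.span K (Γ' : Set A) = ⊤) ∧ Λ < Γ' ∧
          (∀ Γ'' : Subalgebra R A,
            (Module.Finite R Γ'' ∧ Submodule.span K (Γ'' : Set A) = ⊤) →
            Λ ≤ Γ'' → Γ'' ≤ Γ' → Γ'' = Λ ∨ Γ'' = Γ') ∧
          conductorIdeal Λ Γ' = 𝔓) → Γ' = Γ) := by
  obtain ⟨x₀, hx₀P, -, hx₀span⟩ := hGor
  have hx₀ : IsColonGenerator Λ 𝔓 x₀ := ⟨hx₀P, hx₀span⟩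
  have hlt : Λ < multiplierRing Λ 𝔓 :=
    lt_of_le_of_ne (le_multiplierRing Λ 𝔓) fun h => hneq (congrArg SetLike.coe h).symm
  have hminimal : ∀ Γ'' : Subalgebra R A,
      (Module.Finite R Γ'' ∧ Submodule.span K (Γ'' : Set A) = ⊤) →
      Λ ≤ Γ'' → Γ'' ≤ multiplierRing Λ 𝔓 → Γ'' = Λ ∨ Γ'' = multiplierRing Λ 𝔓 :=
    fun _ _ hle hle' => (eq_or_lt_of_le hle).imp Eq.symm
      fun hlt'' => hx₀.eq_multiplierRing_of_lt_of_le hmax hlt'' hle'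
  have := hΛfin
  refine ⟨multiplierRing Λ 𝔓, rfl, ⟨⟨hx₀.finite_multiplierRing, ?_⟩, hlt, hminimal,
    conductorIdeal_multiplierRing hmax hlt⟩, ?_⟩
  · exact top_unique (hΛspan ▸ Submodule.span_mono hlt.le)
  rintro Γ' ⟨-, hlt', -, hcond'⟩
  exact hx₀.eq_multiplierRing_of_lt_of_le hmax hlt' (hcond' ▸ le_multiplierRing_conductorIdeal Λ Γ')

/-- Let `Λ` be an order of an étale algebra which is Gorenstein at
the maximal ideal `𝔓` (the `Λ/𝔓`-vector space `(Λ : 𝔓)/Λ` is one-dimensional,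
spanned by the class of some `x₀ ∉ Λ`) and suppose `Λ ≠ (𝔓 : 𝔓)`.  Then
`Γ = (𝔓 : 𝔓)` is the unique minimal overorder of `Λ` with conductor
`(Λ : Γ) = 𝔓`. -/
theorem statement19 {R : Type*} {K A : Type u} [CommRing R] [IsDedekindDomain R]
    [Field K] [Algebra R K] [IsFractionRing R K] [CommRing A] [Algebra K A]
    [Algebra R A] [IsScalarTower R K A] [FiniteDimensional K A] [Algebra.Etale K A]
    (hresfin : ∀ I : Ideal R, I ≠ ⊥ → Finite (R ⧸ I))
    (Λ : Subalgebra R A)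
    (hΛfin : Module.Finite R Λ) (hΛspan : Submodule.span K (Λ : Set A) = ⊤)
    (𝔓 : Ideal Λ) (hmax : 𝔓.IsMaximal)
    (hGor : ∃ x₀ : A, (∀ p : Λ, p ∈ 𝔓 → x₀ * (p : A) ∈ Λ) ∧ x₀ ∉ Λ ∧
      ∀ x : A, (∀ p : Λ, p ∈ 𝔓 → x * (p : A) ∈ Λ) →
        ∃ a : Λ, x - (a : A) * x₀ ∈ Λ)
    (hneq : {x : A | ∀ p : Λ, p ∈ 𝔓 → ∃ q : Λ, q ∈ 𝔓 ∧ x * (p : A) = (q : A)}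
      ≠ (Λ : Set A)) :
    ∃ Γ : Subalgebra R A,
      (Γ : Set A) =
        {x : A | ∀ p : Λ, p ∈ 𝔓 → ∃ q : Λ, q ∈ 𝔓 ∧ x * (p : A) = (q : A)} ∧
      ((Module.Finite R Γ ∧ Submodule.span K (Γ : Set A) = ⊤) ∧ Λ < Γ ∧
        (∀ Γ'' : Subalgebra R A,
          (Module.Finite R Γ'' ∧ Submodule.span K (Γ'' : Set A) = ⊤) →
          Λ ≤ Γ'' → Γ'' ≤ Γ → Γ'' = Λ ∨ Γ'' = Γ) ∧
        conductorIdeal Λ Γ = 𝔓) ∧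
      (∀ Γ' : Subalgebra R A,
        ((Module.Finite R Γ' ∧ Submodule.span K (Γ' : Set A) = ⊤) ∧ Λ < Γ' ∧
          (∀ Γ'' : Subalgebra R A,
            (Module.Finite R Γ'' ∧ Submodule.span K (Γ'' : Set A) = ⊤) →
            Λ ≤ Γ'' → Γ'' ≤ Γ' → Γ'' = Λ ∨ Γ'' = Γ') ∧
          conductorIdeal Λ Γ' = 𝔓) → Γ' = Γ) :=
  statement19_general Λ hΛfin hΛspan 𝔓 hmax hGor hneq
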